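/- arXiv:2206.00462 — 6 statements merged into one kernel-verified Lean document; each statement's English description precedes it below -/
import Mathlib

section
/- Let p be an odd prime with p ≡ 1 (mod 3) and ω ∈ F_p a primitive 3rd root of unity. There are no a₁,...,a₅ ∈ F_p, all nonzero, and no integer t with t ≡ 2 (mod 3), 5 ≤ t ≤ 3p - 2, such that the polynomial c(x) = 1 + a₁x + a₂x² + a₃x³ + a₄x⁴ + a₅x^t (viewed in F_p[x]/(x^{3p}-1)) satisfies c(1) = c(ω) = c(ω²) = c'(1) = c'(ω) = c''(1) = c'''(1) = 0. -/
open Polynomial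

theorem stmt_5 (p : ℕ) (hp : p.Prime) (hodd : p ≠ 2) (hp3 : p % 3 = 1)
    (ω : ZMod p) (hω3 : ω ^ 3 = 1) (hω1 : ω ≠ 1) :
    ¬ ∃ (a₁ a₂ a₃ a₄ a₅ : ZMod p) (t : ℕ),
      a₁ ≠ 0 ∧ a₂ ≠ 0 ∧ a₃ ≠ 0 ∧ a₄ ≠ 0 ∧ a₅ ≠ 0 ∧
      t % 3 = 2 ∧ 5 ≤ t ∧ t ≤ 3 * p - 2 ∧
      (let c : Polynomial (ZMod p) :=
        1 + C a₁ * X + C a₂ * X ^ 2 + C a₃ * X ^ 3 + C a₄ * X ^ 4 + C a₅ * X ^ t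
       c.eval 1 = 0 ∧ c.eval ω = 0 ∧ c.eval (ω ^ 2) = 0 ∧
       (derivative c).eval 1 = 0 ∧ (derivative c).eval ω = 0 ∧
       (derivative (derivative c)).eval 1 = 0 ∧
       (derivative (derivative (derivative c))).eval 1 = 0) := by
  haveI : Fact p.Prime := ⟨hp⟩
  rintro ⟨a₁, a₂, a₃, a₄, a₅, t, -, -, -, -, -, htm, ht5, -, h1, h2, h3, h4, h5, h6, h7⟩
  simp only [derivative_add, derivative_one, derivative_mul, derivative_C, derivative_X,
    derivative_X_pow, zero_mul, zero_add, mul_one, eval_add, eval_mul, eval_pow, eval_C,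
    eval_X, eval_one, one_pow, eval_natCast] at h1 h2 h3 h4 h5 h6 h7
  -- basic nonvanishing facts
  have h2ne : (2 : ZMod p) ≠ 0 := by
    intro h
    have : (p : ℕ) ∣ 2 := by
      have := (ZMod.natCast_eq_zero_iff 2 p).mp (by exact_mod_cast h)
      exact this
    exact hodd ((Nat.prime_dvd_prime_iff_eq hp Nat.prime_two).mp this)
  have h3ne : (3 : ZMod p) ≠ 0 := by
    intro h
    have hd : (p : ℕ) ∣ 3 := (ZMod.natCast_eq_zero_iff 3 p).mp (by exact_mod_cast h)
    have := (Nat.prime_dvd_prime_iff_eq hp Nat.prime_three).mp hd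
    omega
  have hω0 : ω ≠ 0 := by
    intro h; rw [h] at hω3; simp at hω3
  have hωm1 : ω - 1 ≠ 0 := sub_ne_zero.mpr hω1
  have hq : ω ^ 2 + ω + 1 = 0 := by
    have : (ω - 1) * (ω ^ 2 + ω + 1) = 0 := by linear_combination hω3
    rcases mul_eq_zero.mp this with h | h
    · exact absurd h hωm1
    · exact h
  -- power facts
  have key : ∀ n : ℕ, ω ^ n = ω ^ (n % 3) := by
    intro n
    conv_lhs => rw [← Nat.div_add_mod n 3]
    rw [pow_add, pow_mul, hω3, one_pow, one_mul]
  have e1 : ω ^ t = ω ^ 2 := by rw [key t, htm]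
  have e2 : ω ^ (t - 1) = ω := by
    rw [key, (by omega : (t - 1) % 3 = 1), pow_one]
  have e3 : (ω ^ 2) ^ t = ω := by
    rw [← pow_mul, key, (by omega : (2 * t) % 3 = 1), pow_one]
  rw [e1] at h2
  rw [e3] at h3
  rw [e2] at h5
  have c1 : ((t - 1 : ℕ) : ZMod p) = (t : ZMod p) - 1 := by
    push_cast [Nat.cast_sub (by omega : 1 ≤ t)]; ring
  have c2 : ((t - 1 - 1 : ℕ) : ZMod p) = (t : ZMod p) - 2 := by
    rw [(by omega : t - 1 - 1 = t - 2)]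
    push_cast [Nat.cast_sub (by omega : 2 ≤ t)]; ring
  rw [c1] at h6
  rw [c1, c2] at h7
  norm_num at h2 h3 h4 h5 h6 h7
  set τ : ZMod p := (t : ZMod p) with hτ
  have H2 : 1 + a₁ * ω + a₂ * ω ^ 2 + a₃ + a₄ * ω + a₅ * ω ^ 2 = 0 := by
    linear_combination h2 - (a₃ + a₄ * ω) * hω3
  have H3 : 1 + a₁ * ω ^ 2 + a₂ * ω + a₃ + a₄ * ω ^ 2 + a₅ * ω = 0 := by
    linear_combination h3 - (a₂ * ω + a₃ * (ω ^ 3 + 1) + a₄ * ω ^ 2 * (ω ^ 3 + 1)) * hω3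
  have H5 : a₁ + 2 * a₂ * ω + 3 * a₃ * ω ^ 2 + 4 * a₄ + τ * a₅ * ω = 0 := by
    linear_combination h5 - 4 * a₄ * hω3
  -- step 1 : a₁ + a₄ = a₂ + a₅
  have hk : a₁ + a₄ - (a₂ + a₅) = 0 := by
    have h : (a₁ + a₄ - (a₂ + a₅)) * (ω * (1 - ω)) = 0 := by
      linear_combination H2 - H3
    rcases mul_eq_zero.mp h with h | h
    · exact h
    · rcases mul_eq_zero.mp h with h | h
      · exact absurd h hω0
      · exact absurd (by linear_combination -h) hωm1
  have hs : a₁ + a₄ = 0 := by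
    have h : (3 : ZMod p) * (a₁ + a₄) = 0 := by
      linear_combination h1 - H2 + (1 - ω ^ 2) * hk + (a₁ + a₄) * hq
    rcases mul_eq_zero.mp h with h | h
    · exact absurd h h3ne
    · exact h
  have hs2 : a₂ + a₅ = 0 := by linear_combination hs - hk
  have hs3 : a₃ = -1 := by linear_combination h1 - hs - hs2
  have ha4 : a₄ = -a₁ := by linear_combination hs
  have ha5 : a₅ = -a₂ := by linear_combination hs2
  subst ha4 ha5 hs3
  -- F1 : (2 - τ) * a₂ + 3ω² = 0
  have hF1 : ((2 : ZMod p) - τ) * a₂ + 3 * ω ^ 2 = 0 := by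
    have h : (ω - 1) * (((2 : ZMod p) - τ) * a₂ + 3 * ω ^ 2) = 0 := by
      linear_combination H5 - h4 + 3 * hω3
    rcases mul_eq_zero.mp h with h | h
    · exact absurd h hωm1
    · exact h
  -- F2 : a₁ = ω
  have ha1 : a₁ = ω := by
    have h : (3 : ZMod p) * (a₁ - ω) = 0 := by
      linear_combination -h4 + hF1 - 3 * hq
    rcases mul_eq_zero.mp h with h | h
    · exact absurd h h3ne
    · linear_combination h
  -- F3 : (τ+1)·3ω² + 12ω + 6 = 0
  have hF3 : (τ + 1) * (3 * ω ^ 2) + 12 * ω + 6 = 0 := by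
    linear_combination -h6 + (τ + 1) * hF1 - 12 * ha1
  -- F4 : τ(τ-1)·3ω² + 24ω + 6 = 0
  have hF4 : τ * (τ - 1) * (3 * ω ^ 2) + 24 * ω + 6 = 0 := by
    linear_combination -h7 + τ * (τ - 1) * hF1 - 24 * ha1
  -- F5 : τ = 3 + 2ω
  have hF5 : τ = 3 + 2 * ω := by
    have h : (3 : ZMod p) * (τ - (3 + 2 * ω)) = 0 := by
      linear_combination ω * hF3 - (3 * τ + 3) * hω3 - 12 * hq
    rcases mul_eq_zero.mp h with h | h
    · exact absurd h h3ne
    · linear_combination h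
  -- final contradiction : 18 = 0
  have hx : (18 : ZMod p) * ω + 18 = 0 := by
    linear_combination hF4 - (3 * ω ^ 2 * τ + 6 * ω ^ 2 + 6 * ω ^ 3) * hF5 - (12 * ω + 30) * hω3 - 18 * hq
  have hfin : (18 : ZMod p) = 0 := by
    linear_combination (-ω) * hx + 18 * hq
  have hdvd : (p : ℕ) ∣ 18 := (ZMod.natCast_eq_zero_iff 18 p).mp (by exact_mod_cast hfin)
  have hge := hp.two_le
  have hle : p ≤ 18 := Nat.le_of_dvd (by norm_num) hdvd
  interval_cases p <;> first | omega | (revert hdvd; decide)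
end

section
/- Let p be an odd prime, l ≥ 3, and ω₀ a primitive element of F_p. Let t₁ > t₂ be integers with ord(ω₀^{t₁}) = m₁, ord(ω₀^{t₂}) = m₂, lcm(m₁,m₂) = l, and gcd(t₁ - t₂, l) = 1. Then there is no nonzero binomial c(x) = 1 + a₁x^t with a₁ ≠ 0 and 0 < t < lp such that c(ω₀^{t₁}) = c(ω₀^{t₂}) = 0 and the formal derivative c'(ω₀^{t₁}) = 0. -/
/-!
The derivative condition gives `p ∣ t`. The two vanishing conditions give
`ω₀ ^ (t₁ * t) = ω₀ ^ (t₂ * t)`, so `orderOf ω₀ ∣ (t₁ - t₂) * t`; since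
`l = lcm (orderOf (ω₀ ^ t₁)) (orderOf (ω₀ ^ t₂))` divides `orderOf ω₀` and is prime to `t₁ - t₂`,
this gives `l ∣ t`. Finally `l ∣ orderOf ω₀ ∣ p - 1` is prime to `p`, so `l * p ∣ t`,
which is impossible for `0 < t < l * p`.
-/

open Polynomial

section Binomial

variable {K : Type*} [Field K] {a x y : K} {t : ℕ}

lemma eval_one_add_C_mul_X_pow : (1 + C a * X ^ t).eval x = 1 + a * x ^ t := by
  simp only [eval_add, eval_one, eval_mul, eval_C, eval_pow, eval_X]

lemma ne_zero_of_eval_one_add_C_mul_X_pow_eq_zero (ht : t ≠ 0)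
    (h : (1 + C a * X ^ t).eval x = 0) : x ≠ 0 := by
  rintro rfl
  simp [zero_pow ht] at h

lemma pow_eq_pow_of_eval_one_add_C_mul_X_pow_eq_zero (hx : (1 + C a * X ^ t).eval x = 0)
    (hy : (1 + C a * X ^ t).eval y = 0) : x ^ t = y ^ t := by
  rw [eval_one_add_C_mul_X_pow, add_eq_zero_iff_eq_neg'] at hx hy
  exact mul_left_cancel₀ (left_ne_zero_of_mul (hx ▸ neg_ne_zero.mpr one_ne_zero))
    (hx.trans hy.symm)

lemma dvd_of_derivative_eval_one_add_C_mul_X_pow_eq_zero (p : ℕ) [CharP K p] (ha : a ≠ 0)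
    (hx : x ≠ 0) (h : (derivative (1 + C a * X ^ t)).eval x = 0) : p ∣ t := by
  simp only [derivative_add, derivative_one, derivative_C_mul_X_pow, zero_add, eval_C_mul,
    eval_X_pow, mul_eq_zero, ha, pow_ne_zero _ hx, or_false, false_or] at h
  exact (CharP.cast_eq_zero_iff K p t).mp h

end Binomial

lemma orderOf_dvd_sub_mul_of_pow_pow_eq {M₀ : Type*} [MonoidWithZero M₀]
    [IsLeftCancelMulZero M₀] {x : M₀}
    (hx : x ≠ 0) {i j t : ℕ} (hij : i ≤ j) (h : (x ^ j) ^ t = (x ^ i) ^ t) :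
    orderOf x ∣ (j - i) * t := by
  apply orderOf_dvd_of_pow_eq_one
  apply mul_left_cancel₀ (pow_ne_zero (i * t) hx)
  rw [← pow_add, ← add_mul, Nat.add_sub_cancel' hij, mul_one, pow_mul, pow_mul, h]

theorem stmt_7_general (p : ℕ) (hp : p.Prime) (l : ℕ)
    (ω₀ : ZMod p)
    (t₁ t₂ m₁ m₂ : ℕ) (ht : t₂ < t₁)
    (hm₁ : orderOf (ω₀ ^ t₁) = m₁) (hm₂ : orderOf (ω₀ ^ t₂) = m₂)
    (hlcm : Nat.lcm m₁ m₂ = l) (hgcd : Nat.gcd (t₁ - t₂) l = 1) :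
    ¬ ∃ (a₁ : ZMod p) (t : ℕ), a₁ ≠ 0 ∧ 0 < t ∧ t < l * p ∧
      (let c : Polynomial (ZMod p) := 1 + C a₁ * X ^ t
       c.eval (ω₀ ^ t₁) = 0 ∧ c.eval (ω₀ ^ t₂) = 0 ∧
       (derivative c).eval (ω₀ ^ t₁) = 0) := by
  have := Fact.mk hp
  rintro ⟨a₁, t, ha₁, htpos, htlt, hc₁, hc₂, hd⟩
  have hω₀ : ω₀ ≠ 0 := ne_zero_pow (by omega)
    (ne_zero_of_eval_one_add_C_mul_X_pow_eq_zero htpos.ne' hc₁)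
  have hpt : p ∣ t :=
    dvd_of_derivative_eval_one_add_C_mul_X_pow_eq_zero p ha₁ (pow_ne_zero _ hω₀) hd
  have hl_dvd : l ∣ orderOf ω₀ :=
    hlcm ▸ hm₁ ▸ hm₂ ▸ Nat.lcm_dvd (orderOf_pow_dvd t₁) (orderOf_pow_dvd t₂)
  have hlt : l ∣ t := Nat.Coprime.dvd_of_dvd_mul_left (Nat.coprime_comm.mp hgcd) <|
    hl_dvd.trans <| orderOf_dvd_sub_mul_of_pow_pow_eq hω₀ ht.le <|
      pow_eq_pow_of_eval_one_add_C_mul_X_pow_eq_zero hc₁ hc₂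
  have hlp : Nat.Coprime l p :=
    Nat.Coprime.coprime_dvd_left (hl_dvd.trans (ZMod.orderOf_dvd_card_sub_one hω₀))
      ((Nat.coprime_self_sub_left hp.one_le).mpr (Nat.coprime_one_left p))
  exact (Nat.le_of_dvd htpos (hlp.mul_dvd_of_dvd_of_dvd hlt hpt)).not_gt htlt

theorem stmt_7 (p : ℕ) (hp : p.Prime) (hodd : p ≠ 2) (l : ℕ) (hl : 3 ≤ l)
    (ω₀ : ZMod p) (hω₀ : orderOf ω₀ = p - 1)
    (t₁ t₂ m₁ m₂ : ℕ) (ht : t₂ < t₁)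
    (hm₁ : orderOf (ω₀ ^ t₁) = m₁) (hm₂ : orderOf (ω₀ ^ t₂) = m₂)
    (hlcm : Nat.lcm m₁ m₂ = l) (hgcd : Nat.gcd (t₁ - t₂) l = 1) :
    ¬ ∃ (a₁ : ZMod p) (t : ℕ), a₁ ≠ 0 ∧ 0 < t ∧ t < l * p ∧
      (let c : Polynomial (ZMod p) := 1 + C a₁ * X ^ t
       c.eval (ω₀ ^ t₁) = 0 ∧ c.eval (ω₀ ^ t₂) = 0 ∧
       (derivative c).eval (ω₀ ^ t₁) = 0) :=
  stmt_7_general p hp l ω₀ t₁ t₂ m₁ m₂ ht hm₁ hm₂ hlcm hgcd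
end

section
/- Let p be an odd prime, l > 2 dividing p-1, ω₀ a primitive element of F_p, and t₁ > t₂ with gcd(t₁ - t₂, l) = 1. Suppose a₁, a₂ ∈ F_p are nonzero and t is an integer with 2 ≤ t ≤ lp - 1 such that c(x) = 1 + a₁x + a₂x^t satisfies c(ω₀^{t₁}) = c(ω₀^{t₂}) = c'(ω₀^{t₁}) = c'(ω₀^{t₂}) = 0 (formal derivatives). Then both l | t - 1 and p | t - 1, hence lp | t - 1, contradicting 2 ≤ t ≤ lp - 1. -/
open Polynomial

theorem stmt_9 (p : ℕ) (hp : p.Prime) (hodd : p ≠ 2) (l : ℕ) (hl : 2 < l)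
    (hldvd : l ∣ p - 1) (ω₀ : ZMod p) (hω₀ : orderOf ω₀ = p - 1)
    (t₁ t₂ : ℕ) (ht : t₂ < t₁) (hgcd : Nat.gcd (t₁ - t₂) l = 1)
    (hlcm : Nat.lcm (orderOf (ω₀ ^ t₁)) (orderOf (ω₀ ^ t₂)) = l)
    (a₁ a₂ : ZMod p) (ha₁ : a₁ ≠ 0) (ha₂ : a₂ ≠ 0)
    (t : ℕ) (ht2 : 2 ≤ t) (htlp : t ≤ l * p - 1)
    (hc : (let c : Polynomial (ZMod p) := 1 + C a₁ * X + C a₂ * X ^ t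
      c.eval (ω₀ ^ t₁) = 0 ∧ c.eval (ω₀ ^ t₂) = 0 ∧
      (derivative c).eval (ω₀ ^ t₁) = 0 ∧ (derivative c).eval (ω₀ ^ t₂) = 0)) :
    False := by
  haveI := Fact.mk hp
  obtain ⟨h1, h2, h3, h4⟩ := hc
  have hp1 : 1 < p := hp.one_lt
  have hω1 : ω₀ ^ (p - 1) = 1 := by rw [← hω₀]; exact pow_orderOf_eq_one ω₀
  have hωne : ω₀ ≠ 0 := by
    intro h
    rw [h, zero_pow (by omega)] at hω1
    exact one_ne_zero hω1.symm
  set α := ω₀ ^ t₁ with hα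
  set β := ω₀ ^ t₂ with hβ
  simp only [eval_add, eval_mul, eval_pow, eval_one, eval_C, eval_X,
    derivative_add, derivative_mul, derivative_one, derivative_C, derivative_X,
    derivative_X_pow, zero_mul, mul_zero, zero_add, add_zero, mul_one,
    eval_natCast] at h1 h2 h3 h4
  -- h3 : a₁ + a₂ * (t * α^(t-1)) = 0 (up to assoc); normalize
  have h3' : a₁ + a₂ * (t : ZMod p) * α ^ (t - 1) = 0 := by
    rw [mul_assoc]; convert h3 using 2 <;> ring
  have h4' : a₁ + a₂ * (t : ZMod p) * β ^ (t - 1) = 0 := by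
    rw [mul_assoc]; convert h4 using 2 <;> ring
  have hts : (t : ZMod p) ≠ 0 := by
    intro h
    rw [h, mul_zero, zero_mul, add_zero] at h3'
    exact ha₁ h3'
  have hkey : α ^ (t - 1) = β ^ (t - 1) := by
    have := h3'.trans h4'.symm
    have h5 : a₂ * (t : ZMod p) * α ^ (t - 1) = a₂ * (t : ZMod p) * β ^ (t - 1) := by
      linear_combination this
    exact mul_left_cancel₀ (mul_ne_zero ha₂ hts) h5
  have hkey' : ω₀ ^ ((t₁ - t₂) * (t - 1)) = 1 := by
    have hmul : ω₀ ^ ((t₁ - t₂) * (t - 1)) * ω₀ ^ (t₂ * (t - 1)) =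
        1 * ω₀ ^ (t₂ * (t - 1)) := by
      rw [← pow_add, one_mul]
      have he : (t₁ - t₂) * (t - 1) + t₂ * (t - 1) = t₁ * (t - 1) := by
        rw [← add_mul]; congr 1; omega
      rw [he]
      calc ω₀ ^ (t₁ * (t - 1)) = (ω₀ ^ t₁) ^ (t - 1) := by rw [pow_mul]
        _ = (ω₀ ^ t₂) ^ (t - 1) := hkey
        _ = ω₀ ^ (t₂ * (t - 1)) := by rw [pow_mul]
    exact mul_right_cancel₀ (pow_ne_zero _ hωne) hmul
  have hdvd : p - 1 ∣ (t₁ - t₂) * (t - 1) := hω₀ ▸ orderOf_dvd_of_pow_eq_one hkey'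
  have hldvd2 : l ∣ (t₁ - t₂) * (t - 1) := hldvd.trans hdvd
  have hcop : Nat.Coprime l (t₁ - t₂) := Nat.coprime_comm.mp hgcd
  have hlt1 : l ∣ t - 1 := hcop.dvd_of_dvd_mul_left hldvd2
  have hα1 : α ^ (t - 1) = 1 :=
    orderOf_dvd_iff_pow_eq_one.mp ((hlcm ▸ Nat.dvd_lcm_left _ _).trans hlt1)
  have hβ1 : β ^ (t - 1) = 1 :=
    orderOf_dvd_iff_pow_eq_one.mp ((hlcm ▸ Nat.dvd_lcm_right _ _).trans hlt1)
  have hαt : α ^ t = α := by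
    have : α ^ t = α ^ (t - 1) * α := by rw [← pow_succ]; congr 1; omega
    rw [this, hα1, one_mul]
  have hβt : β ^ t = β := by
    have : β ^ t = β ^ (t - 1) * β := by rw [← pow_succ]; congr 1; omega
    rw [this, hβ1, one_mul]
  rw [hαt] at h1
  rw [hβt] at h2
  -- h1 : 1 + a₁ * α + a₂ * α = 0, h2 similarly
  have hαβ : α ≠ β := by
    intro h
    have h6 : ω₀ ^ (t₁ - t₂) * ω₀ ^ t₂ = 1 * ω₀ ^ t₂ := by
      rw [← pow_add, one_mul]
      have : t₁ - t₂ + t₂ = t₁ := by omega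
      rw [this]; exact h
    have h7 : ω₀ ^ (t₁ - t₂) = 1 := mul_right_cancel₀ (pow_ne_zero _ hωne) h6
    have h8 : p - 1 ∣ t₁ - t₂ := hω₀ ▸ orderOf_dvd_of_pow_eq_one h7
    have h9 : l ∣ t₁ - t₂ := hldvd.trans h8
    have := Nat.le_of_dvd (by omega) h9
    have : Nat.gcd (t₁ - t₂) l = l := Nat.gcd_eq_right h9
    omega
  have hsum : (a₁ + a₂) * α = (a₁ + a₂) * β := by linear_combination h1 - h2
  by_cases h : a₁ + a₂ = 0
  · have : (1 : ZMod p) = 0 := by linear_combination h1 - α * h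
    exact one_ne_zero this
  · exact hαβ (mul_left_cancel₀ h hsum)
end

section
/- Let p ≥ 5 be a prime with p ≡ 1 (mod 3) and ω ∈ F_p a primitive cube root of unity. The polynomial c(x) = 1 - x² + 2x^{p+1} + x^{p+2} - x^{2p} - 2x^{2p+1} ∈ F_p[x] is divisible by (x-1)⁴(x-ω)²(x-ω²)², i.e., c and its formal derivatives satisfy c(1)=c'(1)=c''(1)=c'''(1)=0 and c(ω)=c'(ω)=c(ω²)=c'(ω²)=0. -/
open Polynomial

theorem stmt_14 (p : ℕ) (hp : p.Prime) (hp5 : 5 ≤ p) (hp3 : p % 3 = 1)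
    (ω : ZMod p) (hω3 : ω ^ 3 = 1) (hω1 : ω ≠ 1) :
    ((X - 1) ^ 4 * (X - C ω) ^ 2 * (X - C (ω ^ 2)) ^ 2) ∣
      (1 - X ^ 2 + 2 * X ^ (p + 1) + X ^ (p + 2) - X ^ (2 * p)
        - 2 * X ^ (2 * p + 1) : Polynomial (ZMod p)) := by
  haveI : Fact p.Prime := ⟨hp⟩
  -- basic facts about ω
  have hω : ω ^ 2 + ω + 1 = 0 := by
    have h := mul_eq_zero.mp (show (ω - 1) * (ω ^ 2 + ω + 1) = 0 by linear_combination hω3)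
    rcases h with h | h
    · exact absurd (sub_eq_zero.mp h) hω1
    · exact h
  have h3 : 3 ∣ p - 1 := by omega
  obtain ⟨m, hm3⟩ : ∃ m, 3 * m = p - 1 := ⟨(p - 1) / 3, Nat.mul_div_cancel' h3⟩
  have hp1 : p = 3 * m + 1 := by omega
  have h3m : (3 : ZMod p) * (m : ZMod p) = -1 := by
    have : ((3 * m : ℕ) : ZMod p) = ((p - 1 : ℕ) : ZMod p) := by rw [hm3]
    push_cast [Nat.cast_sub (by omega : 1 ≤ p)] at this
    simpa [ZMod.natCast_self] using this
  -- geometric sum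
  set S : Polynomial (ZMod p) := ∑ i ∈ Finset.range m, (X ^ 3) ^ i with hS
  have hgeom : ((X : Polynomial (ZMod p)) ^ 3) ^ m = (X ^ 3 - 1) * S + 1 := by
    have := geom_sum_mul (X ^ 3 : Polynomial (ZMod p)) m
    rw [← hS] at this
    linear_combination -this
  set T : Polynomial (ZMod p) := (1 + 2 * X) * X * (X - 1) * S + 1 with hT
  -- eval of T at cube roots of unity
  have keyT : ∀ η : ZMod p, η ^ 3 = 1 → η ^ 2 + η + 1 = 0 → T.IsRoot η := by
    intro η h3' hq
    have hSη : S.eval η = (m : ZMod p) := by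
      simp [hS, eval_finset_sum, h3']
    simp only [IsRoot, hT, eval_add, eval_mul, eval_sub, eval_one, eval_X, eval_ofNat, hSη]
    linear_combination (2 * (m : ZMod p)) * h3' - (m : ZMod p) * hq + h3m
  -- quadratic facts about ω²
  have hω2ne1 : ω ^ 2 ≠ 1 := by
    intro h
    apply hω1
    have h2 : ω = ω ^ 3 := by rw [pow_succ, h, one_mul]
    rw [h2, hω3]
  have hωne : ω ≠ ω ^ 2 := by
    intro h
    apply hω2ne1
    calc ω ^ 2 = ω * ω := sq ω
    _ = ω ^ 2 * ω := by rw [← h]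
    _ = 1 := by rw [← pow_succ]; exact hω3
  have hη3 : (ω ^ 2) ^ 3 = 1 := by rw [← pow_mul, show 2 * 3 = 3 * 2 by ring, pow_mul, hω3]; simp
  have hηq : (ω ^ 2) ^ 2 + ω ^ 2 + 1 = 0 := by linear_combination ω * hω3 + hω
  -- (X - ω)(X - ω²) = X² + X + 1
  have hωpoly : (C ω : Polynomial (ZMod p)) ^ 2 + C ω + 1 = 0 := by
    have := congrArg (C : ZMod p →+* _) hω
    simpa using this
  have hquad : (X - C ω) * (X - C (ω ^ 2)) = (X ^ 2 + X + 1 : Polynomial (ZMod p)) := by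
    rw [map_pow]
    linear_combination (C ω - X - 1) * hωpoly
  -- divisibility of T by X² + X + 1
  have hTdvd : ((X : Polynomial (ZMod p)) ^ 2 + X + 1) ∣ T := by
    rw [← hquad]
    refine IsCoprime.mul_dvd ?_ ?_ ?_
    · exact Polynomial.isCoprime_X_sub_C_of_isUnit_sub
        ((isUnit_iff_ne_zero).mpr (sub_ne_zero.mpr hωne))
    · exact (dvd_iff_isRoot).mpr (keyT ω hω3 hω)
    · exact (dvd_iff_isRoot).mpr (keyT (ω ^ 2) hη3 hηq)
  -- B factorization
  have hXp : (X : Polynomial (ZMod p)) ^ p = ((X ^ 3 - 1) * S + 1) * X := by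
    have h0 : (X : Polynomial (ZMod p)) ^ p = X ^ (3 * m + 1) :=
      congrArg (fun n => (X : Polynomial (ZMod p)) ^ n) hp1
    rw [h0, pow_succ, pow_mul, hgeom]
  have hBfact : ((1 + 2 * X) * X ^ p + 1 - X ^ 2 : Polynomial (ZMod p))
      = (X ^ 2 + X + 1) * T := by
    rw [hXp, hT]
    ring
  have hBdvd : ((X : Polynomial (ZMod p)) ^ 2 + X + 1) ^ 2 ∣ ((1 + 2 * X) * X ^ p + 1 - X ^ 2) := by
    rw [hBfact, sq]
    exact mul_dvd_mul_left _ hTdvd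
  -- (X-1)^4 divides 1 - X^p
  have hchar : ((X : Polynomial (ZMod p)) - 1) ^ p = X ^ p - 1 := by
    simpa using sub_pow_char (p := p) (X : Polynomial (ZMod p)) 1
  have hAdvd : ((X : Polynomial (ZMod p)) - 1) ^ 4 ∣ (1 - X ^ p) := by
    refine ⟨-(X - 1) ^ (p - 4), ?_⟩
    have h4 : ((X : Polynomial (ZMod p)) - 1) ^ 4 * (X - 1) ^ (p - 4) = (X - 1) ^ p := by
      rw [← pow_add]; congr 1; omega
    linear_combination h4 + hchar
  -- main factorization
  have hc : (1 - X ^ 2 + 2 * X ^ (p + 1) + X ^ (p + 2) - X ^ (2 * p)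
        - 2 * X ^ (2 * p + 1) : Polynomial (ZMod p))
      = (1 - X ^ p) * ((1 + 2 * X) * X ^ p + 1 - X ^ 2) := by
    ring
  rw [hc, mul_assoc, ← mul_pow, hquad]
  exact mul_dvd_mul hAdvd hBdvd
end

section
/- Let p be an odd prime with p ≡ 1 (mod 3) and ω a primitive cube root of unity in F_p. There are no nonzero a₁, a₂, a₃, a₄ ∈ F_p and integers l ≡ 0 (mod 3), t ≡ 1 (mod 3) with 2 ≤ l, t ≤ 3p-1 such that c(x) = 1 + a₁x + a₂x^l + a₃x^{l+1} + a₄x^t satisfies c(1) = c(ω) = c(ω²) = 0 and c'(1) = c'(ω) = 0 and c(1) + c(ω) + c(ω²) = 0 — indeed these conditions force ω² - 1 = 0, contradicting ω³ = 1 with ω ≠ 1. -/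
open Polynomial

theorem stmt_17 (p : ℕ) (hp : p.Prime) (hodd : p ≠ 2) (hp3 : p % 3 = 1)
    (ω : ZMod p) (hω3 : ω ^ 3 = 1) (hω1 : ω ≠ 1) :
    ¬ ∃ (a₁ a₂ a₃ a₄ : ZMod p) (l t : ℕ),
      a₁ ≠ 0 ∧ a₂ ≠ 0 ∧ a₃ ≠ 0 ∧ a₄ ≠ 0 ∧
      l % 3 = 0 ∧ t % 3 = 1 ∧ 2 ≤ l ∧ l ≤ 3 * p - 1 ∧ 2 ≤ t ∧ t ≤ 3 * p - 1 ∧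
      (let c : Polynomial (ZMod p) :=
        1 + C a₁ * X + C a₂ * X ^ l + C a₃ * X ^ (l + 1) + C a₄ * X ^ t
       c.eval 1 = 0 ∧ c.eval ω = 0 ∧ c.eval (ω ^ 2) = 0 ∧
       (derivative c).eval 1 = 0 ∧ (derivative c).eval ω = 0 ∧
       c.eval 1 + c.eval ω + c.eval (ω ^ 2) = 0) := by
  rintro ⟨a₁, a₂, a₃, a₄, l, t, h1, h2, h3, h4, hl3, ht3, hl2, hlu, ht2, htu, hc⟩
  simp only at hc
  obtain ⟨-, -, -, hd1, hdω, -⟩ := hc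
  haveI : Fact p.Prime := ⟨hp⟩
  -- key powers of ω
  have hω2 : ω ^ 2 ≠ 1 := by
    intro h
    have h3 : ω * ω ^ 2 = 1 := by rw [← pow_succ']; exact hω3
    rw [h, mul_one] at h3
    exact hω1 h3
  have hωl : ω ^ l = 1 := by
    obtain ⟨k, hk⟩ := Nat.dvd_of_mod_eq_zero hl3
    rw [hk, pow_mul, hω3, one_pow]
  have hωl1 : ω ^ (l - 1) = ω ^ 2 := by
    have h3 : 3 ≤ l := by omega
    obtain ⟨k, hk⟩ : ∃ k, l - 1 = 3 * k + 2 := by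
      refine ⟨(l - 1) / 3, ?_⟩
      omega
    rw [hk, pow_add, pow_mul, hω3, one_pow, one_mul]
  have hωt1 : ω ^ (t - 1) = 1 := by
    obtain ⟨k, hk⟩ : ∃ k, t - 1 = 3 * k := ⟨(t - 1) / 3, by omega⟩
    rw [hk, pow_mul, hω3, one_pow]
  -- compute derivative evaluations
  simp only [derivative_add, derivative_one, derivative_C_mul, derivative_X,
    derivative_X_pow, eval_add, eval_mul, eval_C, eval_one, eval_pow, eval_X,
    eval_mul, eval_natCast, eval_zero, mul_one, Nat.add_sub_cancel] at hd1 hdω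
  rw [hωl1, hωl, hωt1] at hdω
  simp only [one_pow, mul_one] at hd1
  -- subtract
  have key : a₂ * l * (1 - ω ^ 2) = 0 := by
    have := sub_eq_zero.mpr (hd1.trans hdω.symm)
    ring_nf at this ⊢
    linear_combination this
  have hl0 : (l : ZMod p) = 0 := by
    rcases mul_eq_zero.mp key with h | h
    · rcases mul_eq_zero.mp h with h' | h'
      · exact absurd h' h2
      · exact h'
    · exact absurd (by linear_combination -h) hω2
  have hpl : p ∣ l := (ZMod.natCast_eq_zero_iff l p).mp hl0
  obtain ⟨k, hk⟩ := hpl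
  have hp2 : 2 ≤ p := hp.two_le
  have hk3 : k < 3 := by
    have h1 : p * k < p * 3 := by omega
    exact Nat.lt_of_mul_lt_mul_left h1
  interval_cases k <;> omega
end

section
/- Let p be an odd prime with p ≡ 1 (mod 3) and ω ∈ F_p a primitive cube root of unity. There are no a₁,...,a₅ ∈ F_p with a₃, a₄, a₅ nonzero and integer t ≡ 2 (mod 3), 3 ≤ t ≤ 3p - 3, such that c(x) = 1 + a₁x + a₂x² + a₃x^t + a₄x^{t+1} + a₅x^{t+2} satisfies c(1) = c(ω) = c(ω²) = c'(1) = c'(ω) = c''(1) = 0 (formal derivatives). -/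
open Polynomial

theorem stmt_18 (p : ℕ) (hp : p.Prime) (hodd : p ≠ 2) (hp3 : p % 3 = 1)
    (ω : ZMod p) (hω3 : ω ^ 3 = 1) (hω1 : ω ≠ 1) :
    ¬ ∃ (a₁ a₂ a₃ a₄ a₅ : ZMod p) (t : ℕ),
      a₃ ≠ 0 ∧ a₄ ≠ 0 ∧ a₅ ≠ 0 ∧
      t % 3 = 2 ∧ 3 ≤ t ∧ t ≤ 3 * p - 3 ∧
      (let c : Polynomial (ZMod p) :=
        1 + C a₁ * X + C a₂ * X ^ 2 + C a₃ * X ^ t + C a₄ * X ^ (t + 1)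
          + C a₅ * X ^ (t + 2)
       c.eval 1 = 0 ∧ c.eval ω = 0 ∧ c.eval (ω ^ 2) = 0 ∧
       (derivative c).eval 1 = 0 ∧ (derivative c).eval ω = 0 ∧
       (derivative (derivative c)).eval 1 = 0) := by
  rintro ⟨a₁, a₂, a₃, a₄, a₅, t, ha3, ha4, ha5, htm, htlo, hthi,
    h1, h2, h3, h4, h5, h6⟩
  obtain ⟨k, rfl⟩ : ∃ k, t = 3 * k + 2 := ⟨t / 3, by omega⟩
  have hfield : Fact p.Prime := ⟨hp⟩
  have h3ne : (3 : ZMod p) ≠ 0 := by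
    have : ((3:ℕ) : ZMod p) ≠ 0 := by
      rw [Ne, ZMod.natCast_eq_zero_iff]
      intro h
      have := (Nat.prime_dvd_prime_iff_eq hp (by norm_num)).mp h
      omega
    simpa using this
  have hωne : ω - 1 ≠ 0 := sub_ne_zero.mpr hω1
  have hω2 : ω ^ 2 + ω + 1 = 0 := by
    have : (ω - 1) * (ω ^ 2 + ω + 1) = 0 := by linear_combination hω3
    rcases mul_eq_zero.mp this with h | h
    · exact absurd h hωne
    · exact h
  simp [derivative_add, derivative_mul, derivative_X_pow] at h1 h2 h3 h4 h5 h6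
  have hmod : ∀ n : ℕ, ω ^ n = ω ^ (n % 3) := by
    intro n
    conv_lhs => rw [← Nat.div_add_mod n 3]
    rw [pow_add, pow_mul, hω3, one_pow, one_mul]
  rw [hmod (3*k+2), hmod (3*k+2+1), hmod (3*k+2+2),
    show (3*k+2) % 3 = 2 from by omega, show (3*k+2+1) % 3 = 0 from by omega,
    show (3*k+2+2) % 3 = 1 from by omega] at h2
  simp only [← pow_mul] at h3
  rw [hmod (2*2), hmod (2*(3*k+2)), hmod (2*(3*k+2+1)), hmod (2*(3*k+2+2)),
    show (2*2) % 3 = 1 from by omega, show (2*(3*k+2)) % 3 = 1 from by omega,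
    show (2*(3*k+2+1)) % 3 = 0 from by omega, show (2*(3*k+2+2)) % 3 = 2 from by omega] at h3
  rw [hmod (3*k+1), hmod (3*k+2), hmod (3*k+3),
    show (3*k+1) % 3 = 1 from by omega, show (3*k+2) % 3 = 2 from by omega,
    show (3*k+3) % 3 = 0 from by omega] at h5
  norm_num at h2 h3 h5
  set K : ZMod p := (k : ZMod p) with hK
  set s : ZMod p := 3 * K + 2 with hs
  -- basic eliminations
  have g1 : a₄ + 1 = 0 := by
    have h : (3 : ZMod p) * (a₄ + 1) = 0 := by
      linear_combination h1 + h2 + h3 - (a₁ + a₂ + a₃ + a₅) * hω2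
    rcases mul_eq_zero.mp h with h | h
    · exact absurd h h3ne
    · exact h
  have g2 : a₁ + a₅ = 0 := by
    have h : (3 : ZMod p) * (a₁ + a₅) = 0 := by
      linear_combination h1 + ω * h3 + ω^2 * h2 - (1 + a₄ + a₂ + a₃) * hω2
        - (2*(a₁+a₅) + ω*(a₂+a₃)) * hω3
    rcases mul_eq_zero.mp h with h | h
    · exact absurd h h3ne
    · exact h
  have g3 : a₂ + a₃ = 0 := by
    have h : (3 : ZMod p) * (a₂ + a₃) = 0 := by
      linear_combination h1 + ω^2 * h3 + ω * h2 - (1 + a₄ + a₁ + a₅) * hω2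
        - (2*(a₂+a₃) + ω*(a₁+a₅)) * hω3
    rcases mul_eq_zero.mp h with h | h
    · exact absurd h h3ne
    · exact h
  have g4 : a₃ * (s - 2) + a₅ * (s + 1) - (s + 1) = 0 := by
    linear_combination h4 - g2 - 2 * g3 - (s + 1) * g1
  have g5 : a₃ * ω * (s - 2) + a₅ * (s + 1) - (s + 1) * ω ^ 2 = 0 := by
    linear_combination h5 - g2 - 2 * ω * g3 - (s + 1) * ω ^ 2 * g1
  have g6 : a₃ * (s + 1) * (s - 2) + a₅ * (s + 1) * (s + 2) - s * (s + 1) = 0 := by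
    linear_combination h6 - 2 * g3 - s * (s + 1) * g1
  -- cancel (1 - ω)
  have hB : a₃ * (s - 2) = (s + 1) * (1 + ω) := by
    have h : (ω - 1) * (a₃ * (s - 2) - (s + 1) * (1 + ω)) = 0 := by
      linear_combination g5 - g4
    rcases mul_eq_zero.mp h with h | h
    · exact absurd h hωne
    · linear_combination h
  by_cases hsp : s + 1 = 0
  · have hz : a₃ * (s - 2) = 0 := by rw [hB, hsp, zero_mul]
    rcases mul_eq_zero.mp hz with h | h
    · exact ha3 h
    · exact h3ne (by linear_combination hsp - h)
  · have ha5 : (s + 1) * (a₅ + ω) = 0 := by linear_combination g4 - hB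
    have a₅eq : a₅ = -ω := by
      rcases mul_eq_zero.mp ha5 with h | h
      · exact absurd h hsp
      · linear_combination h
    have hD : (s + 1) * (a₃ * (s - 2) + a₅ * (s + 2) - s) = 0 := by linear_combination g6
    have hD' : a₃ * (s - 2) + a₅ * (s + 2) - s = 0 := by
      rcases mul_eq_zero.mp hD with h | h
      · exact absurd h hsp
      · exact h
    exact hω1 (by linear_combination -hD' + hB + (s + 2) * a₅eq)
end
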